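/- arXiv:math/0405150 — 2 statements merged into one kernel-verified Lean document; each statement's English description precedes it below -/
import Mathlib

section
/- Let Δ be a set of points in ℙⁿ (n ≥ 2) and p ∈ ℙⁿ \ Δ a point such that {p} ∪ Δ is not contained in any linear subspace of dimension r (with r < n). Then there exists a linear subspace H ⊂ ℙⁿ of dimension r that contains at least r+1 points of Δ but does not contain p. -/
open Module Submodule

private lemma aux_extend {K V : Type*} [Field K] [AddCommGroup V] [Module K V]
    [FiniteDimensional K V] :
    ∀ (k : ℕ) (U : Submodule K V), finrank K U + k ≤ finrank K V →
      ∃ W : Submodule K V, U ≤ W ∧ finrank K W = finrank K U + k := by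
  intro k
  induction k with
  | zero => intro U _; exact ⟨U, le_rfl, by simp⟩
  | succ k ih =>
    intro U hU
    have hlt : finrank K U < finrank K V := by omega
    obtain ⟨m, hm⟩ := U.exists_of_finrank_lt hlt
    have hmU : m ∉ U := by simpa using hm 1 one_ne_zero
    have hm0 : m ≠ 0 := by rintro rfl; exact hmU U.zero_mem
    set U' : Submodule K V := U ⊔ K ∙ m with hU'
    have hle : finrank K U' ≤ finrank K U + 1 := by
      calc finrank K U' ≤ finrank K U + finrank K (K ∙ m) :=
            Submodule.finrank_add_le_finrank_add_finrank _ _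
        _ = finrank K U + 1 := by rw [finrank_span_singleton hm0]
    have hltU : U < U' := by
      refine lt_of_le_of_ne le_sup_left ?_
      intro h
      refine hmU ?_
      rw [h]
      exact Submodule.mem_sup_right (Submodule.mem_span_singleton_self m)
    have hgt : finrank K U < finrank K U' := Submodule.finrank_lt_finrank_of_lt hltU
    have heq : finrank K U' = finrank K U + 1 := by omega
    obtain ⟨W, hW1, hW2⟩ := ih U' (by omega)
    exact ⟨W, le_trans le_sup_left hW1, by omega⟩

private lemma aux_extend' {K V : Type*} [Field K] [AddCommGroup V] [Module K V]
    [FiniteDimensional K V] (U : Submodule K V) (m : ℕ) (h1 : finrank K U ≤ m)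
    (h2 : m ≤ finrank K V) : ∃ W : Submodule K V, U ≤ W ∧ finrank K W = m := by
  obtain ⟨W, hW1, hW2⟩ := aux_extend (m - finrank K U) U (by omega)
  exact ⟨W, hW1, by omega⟩

/-- Let Δ be a set of points in ℙⁿ (n ≥ 2) and p ∈ ℙⁿ \ Δ a point such that
{p} ∪ Δ is not contained in any linear subspace of dimension r (with r < n). Then there is a
linear subspace H ⊂ ℙⁿ of dimension r (i.e. of linear rank r+1) containing at least r+1 points
of Δ but not p. -/
theorem stmt_0 {K : Type*} [Field K] {n r : ℕ} (hn : 2 ≤ n) (hr : r < n)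
    (Δ : Set (Projectivization K (Fin (n + 1) → K)))
    (p : Projectivization K (Fin (n + 1) → K)) (hp : p ∉ Δ)
    (hnotcont : ∀ W : Submodule K (Fin (n + 1) → K), Module.finrank K W = r + 1 →
      ¬ (∀ x ∈ insert p Δ, Projectivization.submodule x ≤ W)) :
    ∃ H : Submodule K (Fin (n + 1) → K), Module.finrank K H = r + 1 ∧
      (∃ T ⊆ Δ, T.Finite ∧ r + 1 ≤ T.ncard ∧ ∀ x ∈ T, Projectivization.submodule x ≤ H) ∧
      ¬ Projectivization.submodule p ≤ H := by
  classical
  set V := Fin (n + 1) → K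
  have hVrank : finrank K V = n + 1 := by
    simp [V, Module.finrank_fin_fun]
  set S : Set V := Projectivization.rep '' Δ with hS
  -- Step 1: the span of p.rep together with S has finrank ≥ r + 2
  have hbig : r + 2 ≤ finrank K (span K (insert p.rep S)) := by
    by_contra hcon
    push_neg at hcon
    have hle : finrank K (span K (insert p.rep S)) ≤ r + 1 := by omega
    obtain ⟨W, hW1, hW2⟩ := aux_extend' (span K (insert p.rep S)) (r + 1) hle (by omega)
    refine hnotcont W hW2 ?_
    intro x hx
    rw [Projectivization.submodule_eq, Submodule.span_singleton_le_iff_mem]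
    apply hW1
    apply Submodule.subset_span
    rcases hx with rfl | hx
    · exact Set.mem_insert _ _
    · exact Set.mem_insert_of_mem _ ⟨x, hx, rfl⟩
  -- Extend {p.rep} to a linearly independent subset B of insert p.rep S spanning it
  have hpne : p.rep ≠ 0 := p.rep_nonzero
  have hsing : LinearIndependent K ((↑) : ({p.rep} : Set V) → V) :=
    LinearIndepOn.singleton (v := id) hpne
  obtain ⟨B, hBsub, hpB, hspan, hBind'⟩ :=
    exists_linearIndepOn_id_extension hsing (Set.singleton_subset_iff.mpr (Set.mem_insert _ _))
  have hBind : LinearIndependent K ((↑) : B → V) := hBind'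
  have hpmemB : p.rep ∈ B := hpB rfl
  have hBfin : B.Finite := by
    haveI := hBind.finite
    exact B.toFinite
  -- finrank of span B equals B.ncard and is at least r + 2
  haveI : Fintype B := hBfin.fintype
  have hBcard : finrank K (span K B) = B.toFinset.card := by
    have := finrank_span_set_eq_card hBind
    simpa using this
  have hspanle : span K (insert p.rep S) ≤ span K B := Submodule.span_le.mpr hspan
  have hBge : r + 2 ≤ B.toFinset.card := by
    rw [← hBcard]
    exact le_trans hbig (Submodule.finrank_mono hspanle)
  have hBncard : B.ncard = B.toFinset.card := Set.ncard_eq_toFinset_card' B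
  -- remove p.rep, pick t of size r+1
  set B' : Set V := B \ {p.rep} with hB'
  have hB'card : r + 1 ≤ B'.ncard := by
    rw [hB', Set.ncard_diff_singleton_of_mem hpmemB]
    omega
  obtain ⟨t, htB', htcard⟩ := Set.exists_subset_card_eq hB'card
  have htB : t ⊆ B := htB'.trans Set.diff_subset
  have htfin : t.Finite := hBfin.subset htB
  haveI : Fintype t := htfin.fintype
  have htind : LinearIndependent K ((↑) : t → V) := hBind'.mono htB
  set H : Submodule K V := span K t with hH
  have hHrank : finrank K H = r + 1 := by
    have := finrank_span_set_eq_card htind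
    rw [hH, this, ← Set.ncard_eq_toFinset_card', htcard]
  -- p.rep ∉ H
  have hpnotH : p.rep ∉ H := by
    have key := hBind.notMem_span_image (R := K) (s := {j : B | (j : V) ∈ t})
      (x := ⟨p.rep, hpmemB⟩) (by
        simp only [Set.mem_setOf_eq]
        intro hmem
        exact (htB' hmem).2 rfl)
    have himg : (fun j : B => (j : V)) '' {j : B | (j : V) ∈ t} = t := by
      ext v
      constructor
      · rintro ⟨⟨w, hw⟩, hw2, rfl⟩; exact hw2
      · intro hv; exact ⟨⟨v, htB hv⟩, hv, rfl⟩
    rwa [himg] at key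
  -- define T
  set T : Set (Projectivization K V) := {x ∈ Δ | x.rep ∈ t} with hT
  have hrepinj : Function.Injective (Projectivization.rep : Projectivization K V → V) := by
    intro a b hab
    have h1 : Projectivization.mk K a.rep a.rep_nonzero =
        Projectivization.mk K b.rep b.rep_nonzero := by
      simp only [Projectivization.mk_eq_mk_iff]
      exact ⟨1, by simp [hab]⟩
    rw [a.mk_rep, b.mk_rep] at h1
    exact h1
  have himgT : Projectivization.rep '' T = t := by
    ext v
    constructor
    · rintro ⟨x, ⟨hx1, hx2⟩, rfl⟩; exact hx2
    · intro hv
      have hvB' : v ∈ B' := htB' hv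
      have hvS : v ∈ S := by
        rcases hBsub hvB'.1 with h | h
        · exact absurd h hvB'.2
        · exact h
      obtain ⟨x, hx, rfl⟩ := hvS
      exact ⟨x, ⟨hx, hv⟩, rfl⟩
  have hTfin : T.Finite := by
    have : (Projectivization.rep '' T).Finite := himgT ▸ htfin
    exact Set.Finite.of_finite_image this (hrepinj.injOn)
  have hTcard : T.ncard = r + 1 := by
    rw [← htcard, ← himgT, Set.ncard_image_of_injective _ hrepinj]
  refine ⟨H, hHrank, ⟨T, fun x hx => hx.1, hTfin, hTcard.ge, ?_⟩, ?_⟩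
  · intro x hx
    rw [Projectivization.submodule_eq, Submodule.span_singleton_le_iff_mem]
    exact Submodule.subset_span hx.2
  · intro hle
    rw [Projectivization.submodule_eq, Submodule.span_singleton_le_iff_mem] at hle
    exact hpnotH hle
end

section
/- Let F be a nonzero homogeneous polynomial of degree 4 in ℂ[x₀,…,x₄] and L a line contained in its zero set X. If a general 2-plane Π through L meets X in L ∪ S with S a plane cubic, then every singular point of X lying on L belongs to L ∩ S, and hence L contains at most 3 singular points of X when L ⊄ Sing(X) and the cubic S meets L in at most 3 points. -/
open MvPolynomial

lemma aux_chain {σ τ : Type*} [Fintype σ] [DecidableEq σ] [DecidableEq τ]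
    (p : σ → MvPolynomial τ ℂ) (j : τ) (f : MvPolynomial σ ℂ) :
    pderiv j (aeval p f) = ∑ i, aeval p (pderiv i f) * pderiv j (p i) := by
  induction f using MvPolynomial.induction_on with
  | C a => simp
  | add f g hf hg =>
      rw [map_add, map_add, hf, hg, ← Finset.sum_add_distrib]
      exact Finset.sum_congr rfl fun i _ => by rw [map_add, map_add, add_mul]
  | mul_X f i hf =>
      have hX : ∀ k : σ, pderiv k (f * X i)
          = pderiv k f * X i + f * (Pi.single (M := fun _ => MvPolynomial σ ℂ) k 1 i) := by
        intro k; rw [pderiv_mul, pderiv_X]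
      rw [map_mul, aeval_X, pderiv_mul, hf]
      simp only [hX, map_add, map_mul, aeval_X, add_mul, Pi.single_apply, apply_ite,
        map_one, map_zero, mul_one, mul_zero, zero_mul, ite_mul]
      have hsplit : ∀ x : σ,
          (if i = x then aeval p (pderiv x f) * p i * pderiv j (p x)
              + aeval p f * pderiv j (p x)
            else aeval p (pderiv x f) * p i * pderiv j (p x) + 0)
          = aeval p (pderiv x f) * p i * pderiv j (p x)
              + if i = x then aeval p f * pderiv j (p x) else 0 := by
        intro x; split <;> simp
      simp only [hsplit, Finset.sum_add_distrib, Finset.sum_ite_eq, Finset.mem_univ, if_true]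
      rw [Finset.sum_mul]
      rw [add_left_inj]
      exact Finset.sum_congr rfl fun k _ => by ring

lemma aux_deg_one {n : ℕ} (m : Fin n →₀ ℕ) (hm : (m.sum fun _ e => e) = 1) :
    ∃ j, m = Finsupp.single j 1 := by
  have hsum : ∑ k ∈ m.support, m k = 1 := hm
  have hne : m.support.Nonempty := by
    by_contra h
    rw [Finset.not_nonempty_iff_eq_empty] at h
    rw [h, Finset.sum_empty] at hsum; exact one_ne_zero hsum.symm
  obtain ⟨j, hj⟩ := hne
  refine ⟨j, ?_⟩
  have hj1 : m j = 1 := by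
    have h1 : 1 ≤ m j := Nat.one_le_iff_ne_zero.2 (Finsupp.mem_support_iff.1 hj)
    have h2 : m j ≤ 1 := hsum ▸ Finset.single_le_sum (fun k _ => Nat.zero_le _) hj
    omega
  have hsupp : m.support = {j} := by
    ext k
    simp only [Finset.mem_singleton]
    constructor
    · intro hk
      by_contra hne
      have hpair : ({j, k} : Finset (Fin n)) ⊆ m.support := by
        intro a ha; simp only [Finset.mem_insert, Finset.mem_singleton] at ha
        rcases ha with rfl | rfl <;> assumption
      have := Finset.sum_le_sum_of_subset hpair (f := m)
      rw [Finset.sum_pair (Ne.symm hne), hsum, hj1] at this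
      have : 1 ≤ m k := Nat.one_le_iff_ne_zero.2 (Finsupp.mem_support_iff.1 hk)
      omega
    · rintro rfl; exact hj
  have := (Finsupp.support_eq_singleton.1 hsupp).2
  rw [this, hj1]

lemma aux_linear {n : ℕ} (ℓ : MvPolynomial (Fin n) ℂ) (h : ℓ.IsHomogeneous 1) :
    ℓ = ∑ j, MvPolynomial.C (ℓ.coeff (Finsupp.single j 1)) * MvPolynomial.X j := by
  ext m
  rw [MvPolynomial.coeff_sum]
  simp only [MvPolynomial.coeff_C_mul, MvPolynomial.coeff_X']
  by_cases hm : ∃ j, m = Finsupp.single j 1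
  · obtain ⟨j, rfl⟩ := hm
    rw [Finset.sum_eq_single j]
    · simp
    · intro k _ hk
      rw [if_neg, mul_zero]
      intro hEq
      exact hk (by
        have := DFunLike.congr_fun hEq k
        simp [Finsupp.single_apply] at this
        by_contra hne
        simp_all)
    · intro h; exact absurd (Finset.mem_univ j) h
  · have hz : ℓ.coeff m = 0 := by
      by_contra hc
      have := h hc
      rw [Finsupp.weight_apply] at this
      exact hm (aux_deg_one m (by simpa using this))
    rw [hz]
    rw [Finset.sum_eq_zero]
    intro k _
    rw [if_neg, mul_zero]
    intro hEq
    exact hm ⟨k, hEq.symm⟩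

/-- Let F be a nonzero quartic form defining X ⊂ ℙ⁴ and L a line contained in X.
If a 2-plane Π through L (embedded by an injective linear map ψ : ℂ³ → ℂ⁵) meets X in L ∪ S,
i.e. the restriction F|_Π factors as ℓ·C with ℓ the linear form cutting L and C a cubic form
cutting S, then every singular point of X lying on L belongs to L ∩ S (i.e. C vanishes there);
hence if L ⊄ Sing(X) and S meets L in at most 3 points, L contains at most 3 singular points
of X. -/
theorem stmt_4 (F : MvPolynomial (Fin 5) ℂ) (hF0 : F ≠ 0) (hF : F.IsHomogeneous 4)
    (ψ : (Fin 3 → ℂ) →ₗ[ℂ] (Fin 5 → ℂ)) (hψ : Function.Injective ψ)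
    (ℓ C : MvPolynomial (Fin 3) ℂ) (hℓ : ℓ.IsHomogeneous 1) (hℓ0 : ℓ ≠ 0)
    (hC : C.IsHomogeneous 3)
    (hfact : ∀ u : Fin 3 → ℂ, MvPolynomial.eval (ψ u) F = MvPolynomial.eval u (ℓ * C)) :
    (∀ x : Projectivization ℂ (Fin 3 → ℂ), MvPolynomial.eval x.rep ℓ = 0 →
      (∀ i : Fin 5, MvPolynomial.eval (ψ x.rep) (MvPolynomial.pderiv i F) = 0) →
      MvPolynomial.eval x.rep C = 0) ∧
    ((∃ x : Projectivization ℂ (Fin 3 → ℂ), MvPolynomial.eval x.rep ℓ = 0 ∧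
        ∃ i : Fin 5, MvPolynomial.eval (ψ x.rep) (MvPolynomial.pderiv i F) ≠ 0) →
      {x : Projectivization ℂ (Fin 3 → ℂ) |
        MvPolynomial.eval x.rep ℓ = 0 ∧ MvPolynomial.eval x.rep C = 0}.Finite →
      {x : Projectivization ℂ (Fin 3 → ℂ) |
        MvPolynomial.eval x.rep ℓ = 0 ∧ MvPolynomial.eval x.rep C = 0}.ncard ≤ 3 →
      {x : Projectivization ℂ (Fin 3 → ℂ) | MvPolynomial.eval x.rep ℓ = 0 ∧
        ∀ i : Fin 5, MvPolynomial.eval (ψ x.rep) (MvPolynomial.pderiv i F) = 0}.Finite ∧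
      {x : Projectivization ℂ (Fin 3 → ℂ) | MvPolynomial.eval x.rep ℓ = 0 ∧
        ∀ i : Fin 5, MvPolynomial.eval (ψ x.rep) (MvPolynomial.pderiv i F) = 0}.ncard ≤ 3) := by
  classical
  -- the substitution polynomials realizing ψ
  set p : Fin 5 → MvPolynomial (Fin 3) ℂ :=
    fun i => ∑ j, MvPolynomial.C (ψ (Pi.single j 1) i) * MvPolynomial.X j with hp
  have hpe : ∀ (u : Fin 3 → ℂ) (i : Fin 5), MvPolynomial.eval u (p i) = ψ u i := by
    intro u i
    have hu : u = ∑ j, u j • (Pi.single j 1 : Fin 3 → ℂ) := by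
      ext k
      simp [Finset.sum_apply, Pi.single_apply]
    conv_rhs => rw [hu]
    rw [map_sum, map_sum]
    simp only [Finset.sum_apply, map_mul, map_smul, MvPolynomial.eval_C, MvPolynomial.eval_X,
      Pi.smul_apply, smul_eq_mul]
    exact Finset.sum_congr rfl fun j _ => mul_comm _ _
  have haev : ∀ (u : Fin 3 → ℂ) (q : MvPolynomial (Fin 5) ℂ),
      MvPolynomial.eval u (MvPolynomial.aeval p q) = MvPolynomial.eval (ψ u) q := by
    intro u q
    rw [MvPolynomial.aeval_def, MvPolynomial.eval_eval₂]
    have h1 : ((MvPolynomial.eval u).comp (algebraMap ℂ (MvPolynomial (Fin 3) ℂ)))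
        = RingHom.id ℂ := by
      ext a; simp
    rw [h1, MvPolynomial.eval₂_id]
    have h2 : (fun s => MvPolynomial.eval u (p s)) = ψ u := funext (hpe u)
    rw [h2]
  have hG : MvPolynomial.aeval p F = ℓ * C :=
    MvPolynomial.funext fun u => by rw [haev, hfact]
  -- Part 1
  have part1 : ∀ x : Projectivization ℂ (Fin 3 → ℂ), MvPolynomial.eval x.rep ℓ = 0 →
      (∀ i : Fin 5, MvPolynomial.eval (ψ x.rep) (MvPolynomial.pderiv i F) = 0) →
      MvPolynomial.eval x.rep C = 0 := by
    intro x hx hsing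
    set u := x.rep with hu
    -- the gradient of ℓ*C vanishes at u
    have hgrad : ∀ j : Fin 3, MvPolynomial.eval u (MvPolynomial.pderiv j (ℓ * C)) = 0 := by
      intro j
      rw [← hG, aux_chain, map_sum]
      rw [Finset.sum_eq_zero]
      intro i _
      rw [map_mul, haev, hsing i, zero_mul]
    -- hence (coeff of X j in ℓ) * C(u) = 0 for all j
    have hcoef : ∀ j : Fin 3, ℓ.coeff (Finsupp.single j 1) * MvPolynomial.eval u C = 0 := by
      intro j
      have := hgrad j
      rw [pderiv_mul, map_add, map_mul, map_mul, hx, zero_mul, add_zero] at this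
      have hdl : MvPolynomial.eval u (MvPolynomial.pderiv j ℓ)
          = ℓ.coeff (Finsupp.single j 1) := by
        conv_lhs => rw [aux_linear ℓ hℓ]
        rw [map_sum, map_sum]
        simp [pderiv_C_mul, pderiv_X, Pi.single_apply, apply_ite, Finset.sum_ite_eq']
      rwa [hdl] at this
    by_contra hCne
    apply hℓ0
    rw [aux_linear ℓ hℓ]
    rw [Finset.sum_eq_zero]
    intro j _
    have := hcoef j
    have hcj : ℓ.coeff (Finsupp.single j 1) = 0 := by
      rcases mul_eq_zero.1 this with h | h
      · exact h
      · exact absurd h hCne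
    rw [hcj, map_zero, zero_mul]
  refine ⟨part1, ?_⟩
  intro _ hfin hcard
  have hsub : {x : Projectivization ℂ (Fin 3 → ℂ) | MvPolynomial.eval x.rep ℓ = 0 ∧
      ∀ i : Fin 5, MvPolynomial.eval (ψ x.rep) (MvPolynomial.pderiv i F) = 0} ⊆
      {x : Projectivization ℂ (Fin 3 → ℂ) |
        MvPolynomial.eval x.rep ℓ = 0 ∧ MvPolynomial.eval x.rep C = 0} := by
    rintro x ⟨h1, h2⟩
    exact ⟨h1, part1 x h1 h2⟩
  exact ⟨hfin.subset hsub, le_trans (Set.ncard_le_ncard hsub hfin) hcard⟩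
end
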